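/- arXiv:0707.2515 — 2 statements merged into one kernel-verified Lean document; each statement's English description precedes it below -/
import Mathlib

section
/- Let X be a Polish space. Then the set of Borel probability measures on X with full support (i.e., giving positive mass to every nonempty open set) is a Gδ subset of the space of all Borel probability measures on X equipped with the weak topology. -/
/-! By the portmanteau theorem, `μ ↦ μ U` is lower semicontinuous for open `U`, so having positive
mass on `U` is an open condition; full support need only be tested on a countable basis. -/

open MeasureTheory TopologicalSpace Filter

namespace MeasureTheory.ProbabilityMeasure

variable {Ω : Type*} [MeasurableSpace Ω] [TopologicalSpace Ω] [OpensMeasurableSpace Ω]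
  [HasOuterApproxClosed Ω]

theorem lowerSemicontinuous_apply_of_isOpen {G : Set Ω} (hG : IsOpen G) :
    LowerSemicontinuous fun μ : ProbabilityMeasure Ω ↦ (μ : Measure Ω) G :=
  lowerSemicontinuous_iff_le_liminf.2 fun _ ↦ le_liminf_measure_open_of_tendsto tendsto_id hG

theorem isOpen_setOf_apply_pos {G : Set Ω} (hG : IsOpen G) :
    IsOpen {μ : ProbabilityMeasure Ω | 0 < (μ : Measure Ω) G} :=
  lowerSemicontinuous_iff_isOpen_preimage.1 (lowerSemicontinuous_apply_of_isOpen hG) 0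

theorem isGδ_setOf_forall_isOpen_nonempty_apply_pos [SecondCountableTopology Ω] :
    IsGδ {μ : ProbabilityMeasure Ω |
      ∀ U : Set Ω, IsOpen U → U.Nonempty → 0 < (μ : Measure Ω) U} := by
  have hB := isBasis_countableBasis Ω
  convert IsGδ.biInter (countable_countableBasis Ω) fun U hU ↦
    (isOpen_setOf_apply_pos (hB.isOpen hU)).isGδ using 1
  ext μ
  simp only [Set.mem_ofPred_eq, Set.mem_iInter]
  refine ⟨fun h U hU ↦ h U (hB.isOpen hU) (nonempty_of_mem_countableBasis hU), ?_⟩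
  rintro h U hU ⟨x, hx⟩
  obtain ⟨V, hV, hxV, hVU⟩ := hB.exists_subset_of_mem_open hx hU
  exact (h V hV).trans_le (measure_mono hVU)

end MeasureTheory.ProbabilityMeasure

/-- On a Polish space, the set of Borel probability measures of full support
(positive mass on every nonempty open set) is a Gδ subset of the space of all
Borel probability measures with the weak topology. -/
theorem isGδ_fullSupport_probabilityMeasures
    {X : Type*} [TopologicalSpace X] [PolishSpace X] [MeasurableSpace X] [BorelSpace X] :
    IsGδ {μ : ProbabilityMeasure X |
      ∀ U : Set X, IsOpen U → U.Nonempty → 0 < μ.toMeasure U} :=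
  ProbabilityMeasure.isGδ_setOf_forall_isOpen_nonempty_apply_pos
end

section
/- Let X be a Polish space and φ a continuous flow on X whose periodic points form a dense subset of X. Then the set of invariant Borel probability measures with full support is a dense Gδ subset of the set M¹(X) of all invariant Borel probability measures, equipped with the weak topology. -/
open MeasureTheory Filter Topology

/-- A continuous flow on a topological space. -/
def IsFlow {X : Type*} [TopologicalSpace X] (φ : ℝ → X → X) : Prop :=
  Continuous (fun p : ℝ × X => φ p.1 p.2) ∧ (∀ x, φ 0 x = x) ∧
    ∀ s t x, φ (t + s) x = φ t (φ s x)

/-- A point is periodic if it is fixed by `φ l` for some `l > 0`. -/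
def IsPeriodicPt {X : Type*} (φ : ℝ → X → X) (x : X) : Prop := ∃ l > 0, φ l x = x

/-- A Borel probability measure invariant under the flow. -/
def InvariantProb {X : Type*} [MeasurableSpace X] (φ : ℝ → X → X)
    (μ : ProbabilityMeasure X) : Prop :=
  ∀ t : ℝ, ∀ A : Set X, MeasurableSet A → μ.toMeasure (φ t ⁻¹' A) = μ.toMeasure A

/-- Full support: positive mass on every nonempty open set. -/
def FullSupport {X : Type*} [TopologicalSpace X] [MeasurableSpace X]
    (μ : ProbabilityMeasure X) : Prop :=
  ∀ U : Set X, IsOpen U → U.Nonempty → 0 < μ.toMeasure U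

/-!
The normalized time measure along a periodic orbit is invariant and charges every neighbourhood
of the orbit, so a weighted sum of such measures over a dense sequence of periodic points is an
invariant probability measure `ν` of full support. For every invariant `μ`, the measures
`(1 - t) μ + t ν` with `t > 0` are invariant, have full support, and tend to `μ` as `t → 0`.
The Gδ property holds in the space of all probability measures: by the portmanteau theorem
`μ ↦ μ U` is lower semicontinuous for open `U`, and full support means `0 < μ U` for every `U`
in a countable basis.
-/

open Set Function
open scoped NNReal ENNReal

theorem Function.Periodic.map_volume_restrict_Ioc {Y : Type*} [MeasurableSpace Y] {g : ℝ → Y}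
    {l : ℝ} (hg : Periodic g l) (hgm : Measurable g) (hl : 0 < l) (a b : ℝ) :
    (volume.restrict (Ioc a (a + l))).map g = (volume.restrict (Ioc b (b + l))).map g := by
  ext A hA
  rw [Measure.map_apply hgm hA, Measure.map_apply hgm hA, Measure.restrict_apply (hgm hA),
    Measure.restrict_apply (hgm hA)]
  refine (isAddFundamentalDomain_Ioc hl a).measure_set_eq (isAddFundamentalDomain_Ioc hl b)
    (hgm hA) fun c => ?_
  ext t
  simp [hg.map_vadd_zmultiples c t]

theorem Real.map_const_add_volume_restrict_Ioc (s a b : ℝ) :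
    (volume.restrict (Ioc a b)).map (s + ·) = volume.restrict (Ioc (s + a) (s + b)) := by
  have := (measurePreserving_add_left volume s).restrict_preimage_emb
    (measurableEmbedding_addLeft s) (Ioc (s + a) (s + b))
  simpa using this.map_eq

namespace IsFlow

variable {X : Type*} [TopologicalSpace X] {φ : ℝ → X → X}

theorem continuous_apply (hφ : IsFlow φ) (t : ℝ) : Continuous (φ t) :=
  hφ.1.comp (Continuous.prodMk_right t)

theorem continuous_orbit (hφ : IsFlow φ) (x : X) : Continuous fun t => φ t x :=
  hφ.1.comp (continuous_id.prodMk continuous_const)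

theorem periodic_orbit (hφ : IsFlow φ) {x : X} {l : ℝ} (hx : φ l x = x) :
    Periodic (fun t => φ t x) l := fun t => by
  simp only [hφ.2.2 l t x, hx]

end IsFlow

section PeriodicOrbit

variable {X : Type*} [TopologicalSpace X] [MeasurableSpace X] [BorelSpace X] {φ : ℝ → X → X}
  {x : X} {l : ℝ}

noncomputable def orbitMeasure (φ : ℝ → X → X) (x : X) (l : ℝ) : Measure X :=
  (ENNReal.ofReal l)⁻¹ • (volume.restrict (Ioc 0 l)).map fun t => φ t x

theorem isProbabilityMeasure_orbitMeasure (hφ : IsFlow φ) (x : X) (hl : 0 < l) :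
    IsProbabilityMeasure (orbitMeasure φ x l) := by
  constructor
  rw [orbitMeasure, Measure.smul_apply, Measure.map_apply (hφ.continuous_orbit x).measurable
    MeasurableSet.univ]
  simp [ENNReal.inv_mul_cancel (ENNReal.ofReal_pos.2 hl).ne' ENNReal.ofReal_ne_top]

theorem map_orbitMeasure (hφ : IsFlow φ) (hl : 0 < l) (hx : φ l x = x) (s : ℝ) :
    (orbitMeasure φ x l).map (φ s) = orbitMeasure φ x l := by
  have horbit := (hφ.continuous_orbit x).measurable
  have hshift : φ s ∘ (fun t => φ t x) = (fun t => φ t x) ∘ (s + ·) :=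
    funext fun t => (hφ.2.2 t s x).symm
  rw [orbitMeasure, Measure.map_smul, Measure.map_map (hφ.continuous_apply s).measurable horbit,
    hshift, ← Measure.map_map horbit (measurable_const_add s),
    Real.map_const_add_volume_restrict_Ioc, add_zero,
    (hφ.periodic_orbit hx).map_volume_restrict_Ioc horbit hl s 0, zero_add]

theorem orbitMeasure_pos (hφ : IsFlow φ) (hl : 0 < l) (hx : φ l x = x) {U : Set X}
    (hU : IsOpen U) (hxU : x ∈ U) : 0 < orbitMeasure φ x l U := by
  have hUt : IsOpen ((fun t => φ t x) ⁻¹' U) := hU.preimage (hφ.continuous_orbit x)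
  have hl_mem : l ∈ closure (Ioo 0 l) := by
    rw [closure_Ioo hl.ne]
    exact right_mem_Icc.2 hl.le
  have hne := mem_closure_iff.1 hl_mem _ hUt (by rwa [mem_preimage, hx])
  rw [orbitMeasure, Measure.smul_apply, Measure.map_apply (hφ.continuous_orbit x).measurable
    hU.measurableSet, Measure.restrict_apply hUt.measurableSet, smul_eq_mul]
  refine ENNReal.mul_pos (by simp) (((hUt.inter isOpen_Ioo).measure_pos volume hne).trans_le
    (measure_mono (inter_subset_inter_right _ Ioo_subset_Ioc_self))).ne'

end PeriodicOrbit

theorem MeasureTheory.isProbabilityMeasure_sum_smul {Ω ι : Type*} [MeasurableSpace Ω]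
    {μ : ι → Measure Ω} [∀ i, IsProbabilityMeasure (μ i)] {w : ι → ℝ≥0∞}
    (hw : ∑' i, w i = 1) : IsProbabilityMeasure (Measure.sum fun i => w i • μ i) :=
  ⟨by simp [Measure.sum_apply _ MeasurableSet.univ, hw]⟩

theorem ENNReal.tsum_inv_two_pow_succ : ∑' n : ℕ, (2⁻¹ : ℝ≥0∞) ^ (n + 1) = 1 := by
  rw [ENNReal.tsum_geometric_add_one, ENNReal.one_sub_inv_two, inv_inv,
    ENNReal.inv_mul_cancel two_ne_zero ENNReal.ofNat_ne_top]

section FullSupport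

variable {X : Type*} [TopologicalSpace X] [MeasurableSpace X] [BorelSpace X] {φ : ℝ → X → X}

theorem invariantProb_of_map_eq (hφ : IsFlow φ) {μ : ProbabilityMeasure X}
    (h : ∀ t, (μ : Measure X).map (φ t) = μ) : InvariantProb φ μ := fun t A hA => by
  rw [← Measure.map_apply (hφ.continuous_apply t).measurable hA, h t]

/-- A weighted sum of the orbit measures along a dense sequence of periodic points. -/
theorem exists_invariantProb_fullSupport [SecondCountableTopology X] [Nonempty X]
    (hφ : IsFlow φ) (hper : Dense {x | IsPeriodicPt φ x}) :
    ∃ ν : ProbabilityMeasure X, InvariantProb φ ν ∧ FullSupport ν := by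
  have : Nonempty {x | IsPeriodicPt φ x} := hper.nonempty.to_subtype
  obtain ⟨u, hu⟩ := TopologicalSpace.exists_dense_seq {x | IsPeriodicPt φ x}
  have hdense : DenseRange fun n => (u n : X) :=
    hper.denseRange_val.comp hu continuous_subtype_val
  choose l hl hx using fun n => (u n).2
  have := fun n => isProbabilityMeasure_orbitMeasure hφ (u n : X) (hl n)
  let ν := Measure.sum fun n => (2⁻¹ : ℝ≥0∞) ^ (n + 1) • orbitMeasure φ (u n) (l n)
  have : IsProbabilityMeasure ν := isProbabilityMeasure_sum_smul ENNReal.tsum_inv_two_pow_succ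
  refine ⟨⟨ν, inferInstance⟩, invariantProb_of_map_eq hφ fun t => ?_, fun U hU hne => ?_⟩
  · change ν.map (φ t) = ν
    simp only [ν, Measure.map_sum (hφ.continuous_apply t).aemeasurable, Measure.map_smul,
      map_orbitMeasure hφ (hl _) (hx _)]
  · obtain ⟨n, hn⟩ := hdense.exists_mem_open hU hne
    exact (ENNReal.mul_pos (by simp) (orbitMeasure_pos hφ (hl n) (hx n) hU hn).ne').trans_le
      (Measure.le_sum _ n U)

end FullSupport

namespace MeasureTheory.ProbabilityMeasure

variable {Ω : Type*} [MeasurableSpace Ω]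

noncomputable def convexComb (μ ν : ProbabilityMeasure Ω) (t : ℝ≥0) (ht : t ≤ 1) :
    ProbabilityMeasure Ω :=
  ⟨(1 - t) • (μ : Measure Ω) + t • (ν : Measure Ω), ⟨by
    simp [tsub_add_cancel_of_le (ENNReal.coe_le_one_iff.2 ht)]⟩⟩

theorem convexComb_apply (μ ν : ProbabilityMeasure Ω) {t : ℝ≥0} (ht : t ≤ 1) (A : Set Ω) :
    (convexComb μ ν t ht : Measure Ω) A =
      (1 - t) • (μ : Measure Ω) A + t • (ν : Measure Ω) A :=
  rfl

theorem tendsto_convexComb [TopologicalSpace Ω] [OpensMeasurableSpace Ω] {ι : Type*}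
    {L : Filter ι} (μ ν : ProbabilityMeasure Ω) {t : ι → ℝ≥0} (ht : ∀ i, t i ≤ 1)
    (h : Tendsto t L (𝓝 0)) : Tendsto (fun i => convexComb μ ν (t i) (ht i)) L (𝓝 μ) := by
  rw [tendsto_nhds_iff_toFiniteMeasure_tendsto_nhds]
  have h₁ : Tendsto (fun i => 1 - t i) L (𝓝 1) := by
    simpa using (tendsto_const_nhds (x := (1 : ℝ≥0))).sub h
  have := (h₁.smul_const μ.toFiniteMeasure).add (h.smul_const ν.toFiniteMeasure)
  rw [one_smul, zero_smul, add_zero] at this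
  exact this

end MeasureTheory.ProbabilityMeasure

section Invariant

variable {X : Type*} [MeasurableSpace X] {φ : ℝ → X → X} {μ ν : ProbabilityMeasure X}
  {t : ℝ≥0} (ht : t ≤ 1)

theorem InvariantProb.convexComb (hμ : InvariantProb φ μ) (hν : InvariantProb φ ν) :
    InvariantProb φ (μ.convexComb ν t ht) := fun s A hA => by
  simp only [ProbabilityMeasure.convexComb_apply, hμ s A hA, hν s A hA]

theorem FullSupport.convexComb [TopologicalSpace X] (hν : FullSupport ν) (ht₀ : t ≠ 0) :
    FullSupport (μ.convexComb ν t ht) := fun U hU hne => by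
  rw [ProbabilityMeasure.convexComb_apply]
  exact (ENNReal.mul_pos (by simpa using ht₀) (hν U hU hne).ne').trans_le le_add_self

end Invariant

theorem dense_setOf_fullSupport {X : Type*} [TopologicalSpace X] [MeasurableSpace X]
    [OpensMeasurableSpace X] {φ : ℝ → X → X} {ν : ProbabilityMeasure X}
    (hν_inv : InvariantProb φ ν) (hν : FullSupport ν) :
    Dense {μ : {m : ProbabilityMeasure X // InvariantProb φ m} | FullSupport μ.1} := by
  rintro ⟨μ, hμ⟩
  have ht (n : ℕ) : (2⁻¹ : ℝ≥0) ^ n ≤ 1 := pow_le_one₀ (by positivity) (by norm_num)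
  have hlim : Tendsto (fun n : ℕ => (2⁻¹ : ℝ≥0) ^ n) atTop (𝓝 0) :=
    tendsto_pow_atTop_nhds_zero_of_lt_one (by positivity) (by norm_num)
  exact mem_closure_of_tendsto
    (f := fun n => ⟨μ.convexComb ν _ (ht n), hμ.convexComb (ht n) hν_inv⟩)
    (tendsto_subtype_rng.2 (ProbabilityMeasure.tendsto_convexComb μ ν ht hlim))
    (Eventually.of_forall fun n => hν.convexComb (ht n) (pow_ne_zero _ (by norm_num)))

section Portmanteau

variable {Y : Type*} [TopologicalSpace Y] [MeasurableSpace Y] [OpensMeasurableSpace Y]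
  [HasOuterApproxClosed Y]

theorem MeasureTheory.ProbabilityMeasure.lowerSemicontinuous_measure {U : Set Y}
    (hU : IsOpen U) : LowerSemicontinuous fun μ : ProbabilityMeasure Y => (μ : Measure Y) U :=
  lowerSemicontinuous_iff_le_liminf.2 fun _ => le_liminf_measure_open_of_tendsto tendsto_id hU

open TopologicalSpace in
theorem isGδ_setOf_fullSupport [SecondCountableTopology Y] :
    IsGδ {μ : ProbabilityMeasure Y | FullSupport μ} := by
  have : {μ : ProbabilityMeasure Y | FullSupport μ}
      = ⋂ U ∈ countableBasis Y, {μ : ProbabilityMeasure Y | 0 < (μ : Measure Y) U} := by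
    ext μ
    simp only [mem_ofPred_eq, mem_iInter]
    refine ⟨fun h U hU => h U (isOpen_of_mem_countableBasis hU)
      (nonempty_of_mem_countableBasis hU), fun h U hU ⟨x, hx⟩ => ?_⟩
    obtain ⟨V, hV, hxV, hVU⟩ := (isBasis_countableBasis Y).exists_subset_of_mem_open hx hU
    exact (h V hV).trans_le (measure_mono hVU)
  rw [this]
  exact .biInter (countable_countableBasis Y) fun U hU =>
    ((ProbabilityMeasure.lowerSemicontinuous_measure
      (isOpen_of_mem_countableBasis hU)).isOpen_preimage 0).isGδ

end Portmanteau

/-- On a Polish space, if the periodic points of a continuous flow are dense, then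
the invariant Borel probability measures of full support form a dense Gδ subset of
the set of all invariant Borel probability measures with the weak topology. -/
theorem fullSupport_dense_Gδ_in_invariant
    {X : Type*} [TopologicalSpace X] [PolishSpace X] [MeasurableSpace X] [BorelSpace X]
    (φ : ℝ → X → X) (hflow : IsFlow φ)
    (hper : Dense {x : X | IsPeriodicPt φ x}) :
    Dense {μ : {m : ProbabilityMeasure X // InvariantProb φ m} | FullSupport μ.1} ∧
    IsGδ {μ : {m : ProbabilityMeasure X // InvariantProb φ m} | FullSupport μ.1} := by
  refine ⟨fun μ => ?_, isGδ_setOf_fullSupport.preimage continuous_subtype_val⟩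
  have := μ.1.nonempty
  obtain ⟨ν, hν_inv, hν⟩ := exists_invariantProb_fullSupport hflow hper
  exact dense_setOf_fullSupport hν_inv hν μ
end
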